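/- Let a, b > 0 with 2a + b < 2 and y₀ the continuous periodic solution of My₀ = 1 as above. Then ∫_{-π}^{π} y₀(x)·(1 − (a+b) cos x) dx = 2π; in particular y₀ is not orthogonal to the function 1 − (a+b) cos x in L²(-π, π). -/

import Mathlib

open MeasureTheory Set intervalIntegral
open scoped Real

/-!
On `(0, π)` the formula for `y₀` is the variation-of-constants solution of
`b sin x · y' + (1 - a cos x) y = 1`, that is `b (sin x · y₀)' = 1 - (1 - (a + b) cos x) y₀`.
The integral defining it converges because its integrand behaves like `t ^ ((1 - a) / b - 1)` at
`0` and `a < 1`. Integrating the equation over `[0, π]`, the boundary term `b sin x · y₀ x`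
vanishes at both ends, so the weighted integral over `[0, π]` is `π`, and evenness doubles it.
-/

section Trigonometric

open Real

variable {x : ℝ}

lemma tan_half_pos (hx : x ∈ Ioo 0 π) : 0 < tan (x / 2) :=
  tan_pos_of_pos_of_lt_pi_div_two (by linarith [hx.1]) (by linarith [hx.2])

lemma cos_half_pos (hx : x ∈ Ioo 0 π) : 0 < cos (x / 2) :=
  cos_pos_of_mem_Ioo ⟨by linarith [hx.1, pi_pos], by linarith [hx.2]⟩

lemma cot_rpow_eq_tan_rpow_neg (hx : 0 < tan x) (p : ℝ) : cot x ^ p = tan x ^ (-p) := by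
  rw [rpow_neg hx.le, ← inv_rpow hx.le, ← cot_inv_eq_tan, inv_inv]

lemma tan_half_le_self (hx₀ : 0 ≤ x) (hx : x ≤ π / 2) : tan (x / 2) ≤ x := by
  have hcos : 1 / 2 ≤ cos (x / 2) := by
    rw [← cos_pi_div_three]
    exact cos_le_cos_of_nonneg_of_le_pi (by linarith) (by linarith [pi_pos]) (by linarith)
  calc tan (x / 2) = sin (x / 2) / cos (x / 2) := tan_eq_sin_div_cos _
    _ ≤ (x / 2) / (1 / 2) := div_le_div₀ (by linarith) (sin_le (by linarith)) (by norm_num) hcos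
    _ = x := by ring

lemma half_le_tan_half (hx₀ : 0 ≤ x) (hx : x ≤ π / 2) : x / 2 ≤ tan (x / 2) :=
  le_tan (by linarith) (by linarith [pi_pos])

end Trigonometric

lemma rpow_le_max_mul_rpow_of_mul_le_of_le_mul {f t c C : ℝ} (p : ℝ) (hc : 0 < c) (ht : 0 < t)
    (hlow : c * t ≤ f) (hhigh : f ≤ C * t) : f ^ p ≤ max (c ^ p) (C ^ p) * t ^ p := by
  have hct : 0 < c * t := mul_pos hc ht
  have hC : 0 ≤ C := (pos_of_mul_pos_left (hct.trans_le (hlow.trans hhigh)) ht.le).le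
  rcases le_total p 0 with hp | hp
  · calc f ^ p ≤ (c * t) ^ p := Real.rpow_le_rpow_of_nonpos hct hlow hp
      _ = c ^ p * t ^ p := Real.mul_rpow hc.le ht.le
      _ ≤ _ := by gcongr; exact le_max_left _ _
  · calc f ^ p ≤ (C * t) ^ p := Real.rpow_le_rpow (hct.le.trans hlow) hhigh hp
      _ = C ^ p * t ^ p := Real.mul_rpow hC ht.le
      _ ≤ _ := by gcongr; exact le_max_right _ _

section Integrand

open Real

noncomputable def integrand (α β t : ℝ) : ℝ := sin t ^ (-α - 1) * tan (t / 2) ^ β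

variable {α β : ℝ}

lemma continuousOn_integrand : ContinuousOn (integrand α β) (Ioo 0 π) := by
  intro x hx
  have hsin : ContinuousAt (fun t => sin t ^ (-α - 1)) x :=
    continuous_sin.continuousAt.rpow_const (Or.inl (sin_pos_of_pos_of_lt_pi hx.1 hx.2).ne')
  have htan : ContinuousAt (fun t => tan (t / 2)) x :=
    (continuousAt_tan.mpr (cos_half_pos hx).ne').comp (f := fun t => t / 2)
      (continuousAt_id.div_const 2)
  exact (hsin.mul (htan.rpow_const (Or.inl (tan_half_pos hx).ne'))).continuousWithinAt

lemma integrand_nonneg {t : ℝ} (ht : t ∈ Ioo 0 π) : 0 ≤ integrand α β t := by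
  have := sin_pos_of_pos_of_lt_pi ht.1 ht.2
  have := tan_half_pos ht
  unfold integrand
  positivity

lemma exists_integrand_le_mul_rpow :
    ∃ K, ∀ t ∈ Ioc 0 (π / 2), integrand α β t ≤ K * t ^ (β - α - 1) := by
  refine ⟨max ((2 / π) ^ (-α - 1)) (1 ^ (-α - 1)) * max ((1 / 2) ^ β) (1 ^ β),
    fun t ⟨ht₀, ht⟩ => ?_⟩
  have hsin := rpow_le_max_mul_rpow_of_mul_le_of_le_mul (-α - 1) (by positivity) ht₀
    (mul_le_sin ht₀.le ht) ((sin_le ht₀.le).trans_eq (one_mul t).symm)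
  have htan := rpow_le_max_mul_rpow_of_mul_le_of_le_mul (c := 1 / 2) β (by norm_num) ht₀
    ((half_le_tan_half ht₀.le ht).trans_eq' (by ring))
    ((tan_half_le_self ht₀.le ht).trans_eq (one_mul t).symm)
  calc integrand α β t ≤ (max ((2 / π) ^ (-α - 1)) (1 ^ (-α - 1)) * t ^ (-α - 1)) *
        (max ((1 / 2) ^ β) (1 ^ β) * t ^ β) :=
      mul_le_mul hsin htan (rpow_nonneg (tan_half_pos ⟨ht₀, by linarith [pi_pos]⟩).le _)
        (mul_nonneg (le_max_of_le_right (by positivity)) (by positivity))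
    _ = _ := by rw [show β - α - 1 = -α - 1 + β by ring, rpow_add ht₀]; ring

lemma intervalIntegrable_integrand (hαβ : α < β) {x : ℝ} (hx : x ∈ Ioo 0 π) :
    IntervalIntegrable (integrand α β) volume 0 x := by
  have hπ := pi_pos
  have near_zero : IntervalIntegrable (integrand α β) volume 0 (π / 2) := by
    obtain ⟨K, hK⟩ := exists_integrand_le_mul_rpow (α := α) (β := β)
    refine ((intervalIntegrable_rpow' (by linarith : -1 < β - α - 1)).const_mul K).mono_fun'
      ((continuousOn_integrand.mono ?_).aestronglyMeasurable measurableSet_uIoc) ?_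
    · rw [uIoc_of_le (by linarith)]
      exact Ioc_subset_Ioo_right (by linarith)
    · rw [uIoc_of_le (by linarith)]
      refine (ae_restrict_iff' measurableSet_Ioc).2 (Filter.Eventually.of_forall fun t ht => ?_)
      dsimp only
      rw [Real.norm_eq_abs, abs_of_nonneg (integrand_nonneg ⟨ht.1, by linarith [ht.2]⟩)]
      exact hK t ht
  exact near_zero.trans <| (continuousOn_integrand.mono <|
    ordConnected_Ioo.uIcc_subset ⟨by linarith, by linarith⟩ hx).intervalIntegrable

end Integrand

section VariationOfConstants

open Real

variable {α β x : ℝ}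

/-- The logarithmic derivative of `tan (x / 2)` is `1 / sin x`. -/
lemma hasDerivAt_sin_rpow_mul_tan_half_rpow (hx : x ∈ Ioo 0 π) :
    HasDerivAt (fun z => sin z ^ (α + 1) * tan (z / 2) ^ (-β))
      (((α + 1) * cos x - β) * (sin x ^ α * tan (x / 2) ^ (-β))) x := by
  have hsin := sin_pos_of_pos_of_lt_pi hx.1 hx.2
  have hsin_half : 0 < sin (x / 2) :=
    sin_pos_of_pos_of_lt_pi (by linarith [hx.1]) (by linarith [hx.2, pi_pos])
  have hcos_half := cos_half_pos hx
  have htan := tan_half_pos hx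
  have dsin := (hasDerivAt_rpow_const (p := α + 1) (Or.inl hsin.ne')).comp x (hasDerivAt_sin x)
  have dtan := (hasDerivAt_rpow_const (p := -β) (Or.inl htan.ne')).comp x
    ((hasDerivAt_tan hcos_half.ne').comp x ((hasDerivAt_id x).div_const 2))
  refine (dsin.mul dtan).congr_deriv ?_
  have hsin_eq : sin x = 2 * sin (x / 2) * cos (x / 2) := by
    rw [← sin_two_mul, mul_div_cancel₀ x two_ne_zero]
  simp only [id, add_sub_cancel_right, Function.comp_apply]
  rw [rpow_add_one hsin.ne', rpow_sub_one htan.ne', tan_eq_sin_div_cos, hsin_eq]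
  field_simp
  ring

lemma sin_rpow_mul_tan_half_rpow_mul_integrand (hx : x ∈ Ioo 0 π) :
    sin x ^ (α + 1) * tan (x / 2) ^ (-β) * integrand α β x = 1 := by
  rw [integrand, mul_mul_mul_comm, ← rpow_add (sin_pos_of_pos_of_lt_pi hx.1 hx.2),
    ← rpow_add (tan_half_pos hx)]
  norm_num

lemma hasDerivAt_sin_rpow_mul_tan_half_rpow_mul_integral (hαβ : α < β) (hx : x ∈ Ioo 0 π) :
    HasDerivAt (fun z => sin z ^ (α + 1) * tan (z / 2) ^ (-β) * ∫ t in 0..z, integrand α β t)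
      (((α + 1) * cos x - β) * (sin x ^ α * tan (x / 2) ^ (-β) * ∫ t in 0..x, integrand α β t)
        + 1) x := by
  have dF := integral_hasDerivAt_right (intervalIntegrable_integrand hαβ hx)
    (continuousOn_integrand.stronglyMeasurableAtFilter isOpen_Ioo x hx)
    (continuousOn_integrand.continuousAt (Ioo_mem_nhds hx.1 hx.2))
  refine ((hasDerivAt_sin_rpow_mul_tan_half_rpow hx).mul dF).congr_deriv ?_
  rw [sin_rpow_mul_tan_half_rpow_mul_integrand hx]
  ring

end VariationOfConstants

lemma hasDerivAt_mul_sin_mul_of_eq_integral {a b x : ℝ} (hb : 0 < b) (ha : a < 1)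
    {y : ℝ → ℝ}
    (hy : ∀ x ∈ Ioo (0:ℝ) π,
      y x = (1/b) * (Real.sin x) ^ (a/b) * (Real.cot (x/2)) ^ ((1:ℝ)/b) *
        ∫ t in (0:ℝ)..x, (Real.sin t) ^ (-(a/b) - 1) * (Real.tan (t/2)) ^ ((1:ℝ)/b))
    (hx : x ∈ Ioo 0 π) :
    HasDerivAt (fun z => b * (Real.sin z * y z)) (1 - y x * (1 - (a + b) * Real.cos x)) x := by
  have hy' : ∀ z ∈ Ioo 0 π, b * y z = Real.sin z ^ (a / b) * Real.tan (z / 2) ^ (-(1 / b)) *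
      ∫ t in 0..z, integrand (a / b) (1 / b) t := fun z hz => by
    rw [hy z hz, cot_rpow_eq_tan_rpow_neg (tan_half_pos hz), ← mul_assoc, ← mul_assoc,
      ← mul_assoc, mul_one_div_cancel hb.ne', one_mul]
    rfl
  have hlocal : (fun z => Real.sin z ^ (a / b + 1) * Real.tan (z / 2) ^ (-(1 / b)) *
      ∫ t in 0..z, integrand (a / b) (1 / b) t) =ᶠ[nhds x] fun z => b * (Real.sin z * y z) := by
    filter_upwards [Ioo_mem_nhds hx.1 hx.2] with z hz
    rw [Real.rpow_add_one (Real.sin_pos_of_pos_of_lt_pi hz.1 hz.2).ne', mul_left_comm, hy' z hz]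
    ring
  have hαβ : a / b < 1 / b := div_lt_div_of_pos_right ha hb
  refine ((hasDerivAt_sin_rpow_mul_tan_half_rpow_mul_integral hαβ hx).congr_of_eventuallyEq
    hlocal.symm).congr_deriv ?_
  rw [← hy' x hx]
  field_simp
  ring

lemma integral_mul_eq_pi_of_hasDerivAt {b : ℝ} {y c : ℝ → ℝ} (hy : ContinuousOn y (Icc 0 π))
    (hc : ContinuousOn c (Icc 0 π))
    (hderiv : ∀ x ∈ Ioo 0 π, HasDerivAt (fun z => b * (Real.sin z * y z)) (1 - y x * c x) x) :
    ∫ x in 0..π, y x * c x = π := by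
  have hyc : IntervalIntegrable (fun x => y x * c x) volume 0 π :=
    (hy.mul hc).intervalIntegrable_of_Icc Real.pi_pos.le
  have hFTC := integral_eq_sub_of_hasDerivAt_of_le Real.pi_pos.le
    (continuousOn_const.mul (Real.continuousOn_sin.mul hy)) hderiv
    (intervalIntegrable_const.sub hyc)
  simp only [integral_sub intervalIntegrable_const hyc, Pi.mul_apply, Real.sin_pi, Real.sin_zero,
    intervalIntegral.integral_const, sub_zero, smul_eq_mul, mul_one, zero_mul, mul_zero] at hFTC
  linarith

lemma integral_neg_to_self_of_even {E : Type*} [NormedAddCommGroup E] [NormedSpace ℝ E]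
    {f : ℝ → E} (heven : ∀ x, f (-x) = f x) {a : ℝ} (hf : IntervalIntegrable f volume (-a) a) :
    ∫ x in -a..a, f x = 2 • ∫ x in 0..a, f x := by
  have h0 : (0:ℝ) ∈ uIcc (-a) a := by
    rcases le_total 0 a with ha | ha
    · exact mem_uIcc.2 (Or.inl ⟨by linarith, ha⟩)
    · exact mem_uIcc.2 (Or.inr ⟨ha, by linarith⟩)
  have hleft : ∫ x in -a..0, f x = ∫ x in 0..a, f x := by
    simpa only [neg_zero, heven] using (integral_comp_neg (a := 0) (b := a) f).symm
  rw [← integral_add_adjacent_intervals (hf.mono_set (uIcc_subset_uIcc left_mem_uIcc h0))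
    (hf.mono_set (uIcc_subset_uIcc h0 right_mem_uIcc)), hleft, two_smul]

theorem stmt19_general (a b : ℝ) (hb : 0 < b) (hab : 2*a + b < 2)
    (y₀ : ℝ → ℝ)
    (hy₀even : ∀ x, y₀ (-x) = y₀ x)
    (hy₀ : ∀ x ∈ Ioo (0:ℝ) π,
      y₀ x = (1/b) * (Real.sin x) ^ (a/b) * (Real.cot (x/2)) ^ ((1:ℝ)/b) *
        ∫ t in (0:ℝ)..x, (Real.sin t) ^ (-(a/b) - 1) * (Real.tan (t/2)) ^ ((1:ℝ)/b))
    (hy₀cont : ContinuousOn y₀ (Icc (-π) π)) :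
    (∫ x in (-π)..π, y₀ x * (1 - (a+b) * Real.cos x)) = 2*π ∧
    (∫ x in (-π)..π, y₀ x * (1 - (a+b) * Real.cos x)) ≠ 0 := by
  have hπ := Real.pi_pos
  have hcont : ContinuousOn (fun x => y₀ x * (1 - (a+b) * Real.cos x)) (Icc (-π) π) :=
    hy₀cont.mul (by fun_prop)
  have half : ∫ x in 0..π, y₀ x * (1 - (a+b) * Real.cos x) = π :=
    integral_mul_eq_pi_of_hasDerivAt (hy₀cont.mono (Icc_subset_Icc (by linarith) le_rfl))
      (by fun_prop) fun x hx => hasDerivAt_mul_sin_mul_of_eq_integral hb (by linarith) hy₀ hx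
  have total : ∫ x in (-π)..π, y₀ x * (1 - (a+b) * Real.cos x) = 2 * π := by
    rw [integral_neg_to_self_of_even (fun x => by rw [hy₀even, Real.cos_neg])
      (hcont.intervalIntegrable_of_Icc (by linarith)), half, nsmul_eq_mul, Nat.cast_ofNat]
  exact ⟨total, total ▸ by positivity⟩

/-- For `a, b > 0` with `2a + b < 2` and `y₀` the continuous even periodic
solution of `My₀ = 1`, one has `∫_{-π}^{π} y₀(x)(1 − (a+b) cos x) dx = 2π`; in particular
`y₀` is not orthogonal to `1 − (a+b) cos x` in `L²(-π, π)`. -/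
theorem stmt19 (a b : ℝ) (ha : 0 < a) (hb : 0 < b) (hab : 2*a + b < 2)
    (y₀ : ℝ → ℝ)
    (hy₀even : ∀ x, y₀ (-x) = y₀ x)
    (hy₀ : ∀ x ∈ Ioo (0:ℝ) π,
      y₀ x = (1/b) * (Real.sin x) ^ (a/b) * (Real.cot (x/2)) ^ ((1:ℝ)/b) *
        ∫ t in (0:ℝ)..x, (Real.sin t) ^ (-(a/b) - 1) * (Real.tan (t/2)) ^ ((1:ℝ)/b))
    (hy₀cont : ContinuousOn y₀ (Icc (-π) π)) :
    (∫ x in (-π)..π, y₀ x * (1 - (a+b) * Real.cos x)) = 2*π ∧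
    (∫ x in (-π)..π, y₀ x * (1 - (a+b) * Real.cos x)) ≠ 0 :=
  stmt19_general a b hb hab y₀ hy₀even hy₀ hy₀cont
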